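/- arXiv:2204.08439 — 2 statements merged into one kernel-verified Lean document; each statement's English description precedes it below -/
import Mathlib

section
/- The a-majorization relation is transitive: if p, q, r are supported-below probability distributions on ℤ with p ≻_a q and q ≻_a r, then p ≻_a r. Together with reflexivity (p ≻_a p, since p*p̃ = δ_0 ≥ 0), ≻_a is a preorder. -/
/-! Supported-below sequences are the coefficient functions of Hahn series over `ℤ`, and
convolution is their product. Since `q̃ * q = δ₀`, associativity gives
`p * r̃ = (p * q̃) * (q * r̃)`, a product of two nonnegative sequences. Reflexivity is
`p * p̃ = p̃ * p = δ₀`. -/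

/-- Convolution of two sequences on `ℤ`: `(a*b)(n) = ∑_{k∈ℤ} a(k)·b(n−k)`.
For supported-below sequences this `tsum` has finitely many nonzero terms. -/
noncomputable def conv (a b : ℤ → ℝ) : ℤ → ℝ := fun n => ∑' k : ℤ, a k * b (n - k)

/-- A sequence is supported below if it vanishes for all sufficiently negative indices. -/
def SuppBelow (a : ℤ → ℝ) : Prop := ∃ N : ℤ, ∀ n : ℤ, n < N → a n = 0

/-- A probability distribution on `ℤ`: nonnegative with total sum 1. -/
def IsProbDist (p : ℤ → ℝ) : Prop := (∀ n : ℤ, 0 ≤ p n) ∧ HasSum p 1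

/-- `qt` is the reciprocal sequence `q̃` of `q`, relative to `nstar = n_*(q)`,
the least index where `q` is positive: `q̃` vanishes below `−n_*(q)` and
`(q̃*q)(n) = δ_{n,0}` for all `n`. -/
def IsRecip (q qt : ℤ → ℝ) (nstar : ℤ) : Prop :=
  IsLeast {n : ℤ | 0 < q n} nstar ∧ (∀ n : ℤ, n < -nstar → qt n = 0) ∧
  (∀ n : ℤ, conv qt q n = if n = 0 then (1 : ℝ) else 0)

/-- The generalized Poisson sequence `P_λ : ℤ → ℝ`,
`P_λ(n) = e^{−λ}·λ^n/n!` for `n ≥ 0` and `P_λ(n) = 0` for `n < 0`. -/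
noncomputable def poisson (lam : ℝ) : ℤ → ℝ :=
  fun n => if 0 ≤ n then Real.exp (-lam) * lam ^ n.toNat / (Nat.factorial n.toNat : ℝ) else 0

theorem HahnSeries.coeff_mul_nonneg {Γ R : Type*} [AddCommMonoid Γ] [PartialOrder Γ]
    [IsOrderedCancelAddMonoid Γ] [Semiring R] [PartialOrder R] [IsOrderedRing R]
    {x y : HahnSeries Γ R} (hx : ∀ n, 0 ≤ x.coeff n) (hy : ∀ n, 0 ≤ y.coeff n) (n : Γ) :
    0 ≤ (x * y).coeff n :=
  Finset.sum_nonneg fun _ _ => mul_nonneg (hx _) (hy _)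

theorem conv_comm (a b : ℤ → ℝ) : conv a b = conv b a := by
  ext n
  simpa [conv, mul_comm] using ((Equiv.subLeft n).tsum_eq fun k => a k * b (n - k)).symm

namespace SuppBelow

variable {a b : ℤ → ℝ}

theorem bddBelow_support (h : SuppBelow a) : BddBelow (Function.support a) := by
  obtain ⟨N, hN⟩ := h
  exact ⟨N, fun n hn => not_lt.mp fun hlt => hn (hN n hlt)⟩

noncomputable abbrev toHahnSeries (h : SuppBelow a) : HahnSeries ℤ ℝ :=
  HahnSeries.ofSuppBddBelow a h.bddBelow_support

theorem conv_eq_coeff_mul (ha : SuppBelow a) (hb : SuppBelow b) (n : ℤ) :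
    conv a b n = (ha.toHahnSeries * hb.toHahnSeries).coeff n := by
  set s := Finset.antidiagonal ha.toHahnSeries.isPWO_support hb.toHahnSeries.isPWO_support n
  have hinj : Set.InjOn Prod.fst (s : Set (ℤ × ℤ)) := by
    intro x hx y hy hxy
    simp only [s, Finset.mem_coe, Finset.mem_antidiagonal] at hx hy
    ext <;> omega
  have hsupp : Function.support (fun k => a k * b (n - k)) ⊆ s.image Prod.fst := by
    intro k hk
    refine Finset.mem_image.mpr ⟨(k, n - k), ?_, rfl⟩
    simp [s, left_ne_zero_of_mul hk, right_ne_zero_of_mul hk]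
  rw [conv, tsum_eq_sum' hsupp, Finset.sum_image hinj, HahnSeries.coeff_mul]
  refine Finset.sum_congr rfl fun ij hij => ?_
  obtain rfl : n = ij.1 + ij.2 := (Finset.mem_antidiagonal.mp hij).2.2.symm
  simp

end SuppBelow

namespace IsRecip

variable {q qt : ℤ → ℝ} {nstar : ℤ}

theorem suppBelow (h : IsRecip q qt nstar) : SuppBelow qt :=
  ⟨-nstar, h.2.1⟩

theorem toHahnSeries_mul (h : IsRecip q qt nstar) (hq : SuppBelow q) :
    h.suppBelow.toHahnSeries * hq.toHahnSeries = 1 := by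
  ext n
  rw [← SuppBelow.conv_eq_coeff_mul, h.2.2, HahnSeries.coeff_one]
  split_ifs <;> rfl

theorem conv_nonneg_trans {p rt : ℤ → ℝ} (h : IsRecip q qt nstar) (hp : SuppBelow p)
    (hq : SuppBelow q) (hrt : SuppBelow rt) (hpq : ∀ n, 0 ≤ conv p qt n)
    (hqr : ∀ n, 0 ≤ conv q rt n) (n : ℤ) : 0 ≤ conv p rt n := by
  have hassoc : hp.toHahnSeries * hrt.toHahnSeries =
      (hp.toHahnSeries * h.suppBelow.toHahnSeries) * (hq.toHahnSeries * hrt.toHahnSeries) := by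
    rw [mul_assoc, ← mul_assoc h.suppBelow.toHahnSeries, h.toHahnSeries_mul hq, one_mul]
  rw [SuppBelow.conv_eq_coeff_mul hp hrt, hassoc]
  refine HahnSeries.coeff_mul_nonneg (fun m => ?_) (fun m => ?_) n
  · rw [← SuppBelow.conv_eq_coeff_mul]; exact hpq m
  · rw [← SuppBelow.conv_eq_coeff_mul]; exact hqr m

theorem conv_self_nonneg {p pt : ℤ → ℝ} {np : ℤ} (h : IsRecip p pt np) (n : ℤ) :
    0 ≤ conv p pt n := by
  rw [conv_comm, h.2.2]
  split_ifs <;> norm_num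

end IsRecip

theorem amaj_trans_refl_general (p q r pt qt rt : ℤ → ℝ) (np nq nr : ℤ)
    (hpb : SuppBelow p) (hqb : SuppBelow q)
    (hpt : IsRecip p pt np) (hqt : IsRecip q qt nq) (hrt : IsRecip r rt nr)
    (hpq : ∀ n : ℤ, 0 ≤ conv p qt n) (hqr : ∀ n : ℤ, 0 ≤ conv q rt n) :
    (∀ n : ℤ, 0 ≤ conv p rt n) ∧ (∀ n : ℤ, 0 ≤ conv p pt n) :=
  ⟨hqt.conv_nonneg_trans hpb hqb hrt.suppBelow hpq hqr, hpt.conv_self_nonneg⟩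

/-- a-majorization is transitive: `p ≻_a q` and `q ≻_a r` imply
`p ≻_a r`; together with reflexivity (`p ≻_a p`, since `p*p̃ = δ_0 ≥ 0`),
`≻_a` is a preorder. -/
theorem amaj_trans_refl (p q r pt qt rt : ℤ → ℝ) (np nq nr : ℤ)
    (hp : IsProbDist p) (hq : IsProbDist q) (hr : IsProbDist r)
    (hpb : SuppBelow p) (hqb : SuppBelow q) (hrb : SuppBelow r)
    (hpt : IsRecip p pt np) (hqt : IsRecip q qt nq) (hrt : IsRecip r rt nr)
    (hpq : ∀ n : ℤ, 0 ≤ conv p qt n) (hqr : ∀ n : ℤ, 0 ≤ conv q rt n) :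
    (∀ n : ℤ, 0 ≤ conv p rt n) ∧ (∀ n : ℤ, 0 ≤ conv p pt n) :=
  amaj_trans_refl_general p q r pt qt rt np nq nr hpb hqb hpt hqt hrt hpq hqr
end

section
/- For every λ ≥ 0, the max-QFI and min-QFI of the Poisson distribution P_λ coincide with 4λ: F_max(P_λ) = 4λ = F_min(P_λ). Equivalently, {μ ≥ 0 | P_μ ≻_a P_λ} = [λ,∞) and {μ ≥ 0 | P_λ ≻_a P_μ} = [0,λ]. -/
/-- The max-QFI `F_max(p) = inf{4λ | λ ≥ 0, P_λ ≻_a p} ∈ [0,∞]` (with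
`inf ∅ = ∞`).  Since `P_λ ≻_a p` means `(P_λ * p̃)(n) ≥ 0` for all `n`, it is
expressed through the reciprocal sequence `pt = p̃` of `p`. -/
noncomputable def Fmax (pt : ℤ → ℝ) : ENNReal :=
  sInf {x : ENNReal | ∃ lam : ℝ, 0 ≤ lam ∧
    (∀ n : ℤ, 0 ≤ conv (poisson lam) pt n) ∧ x = ENNReal.ofReal (4 * lam)}

/-- The min-QFI `F_min(p) = sup{4λ | λ ≥ 0, p ≻_a P_λ} ∈ [0,∞]`.  Since
`P̃_λ = P_{−λ}`, the condition `p ≻_a P_λ` reads `(p * P_{−λ})(n) ≥ 0`. -/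
noncomputable def Fmin (p : ℤ → ℝ) : ENNReal :=
  sSup {x : ENNReal | ∃ lam : ℝ, 0 ≤ lam ∧
    (∀ n : ℤ, 0 ≤ conv p (poisson (-lam)) n) ∧ x = ENNReal.ofReal (4 * lam)}

/-!
Since `exp (a + b) = exp a * exp b` already holds at the level of power-series coefficients,
the generalized Poisson sequences form a convolution group: `P_a * P_b = P_{a+b}` for all real
`a, b`. Hence `P_μ ≻_a P_λ` means `P_{μ-λ} ≥ 0`, and `P_c` is nonnegative exactly when `c ≥ 0`
(look at `P_c(1) = e^{-c} c`). So `P_μ ≻_a P_λ` iff `μ ≥ λ`, which gives both sets and both QFIs.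
-/

open Finset

theorem add_pow_div_factorial {K : Type*} [Field K] [CharZero K] (a b : K) (m : ℕ) :
    (a + b) ^ m / m.factorial =
      ∑ k ∈ range (m + 1), a ^ k / k.factorial * (b ^ (m - k) / (m - k).factorial) := by
  rw [add_pow, sum_div]
  refine sum_congr rfl fun k hk => ?_
  have hkm : k ≤ m := Nat.lt_succ_iff.mp (mem_range.mp hk)
  have hchoose : (m.choose k : K) ≠ 0 := by exact_mod_cast (Nat.choose_pos hkm).ne'
  rw [← Nat.choose_mul_factorial_mul_factorial hkm]
  push_cast
  field_simp

section SupportedOnNat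

variable {a b : ℤ → ℝ}

theorem conv_natCast_eq_sum_range (ha : ∀ n < 0, a n = 0) (hb : ∀ n < 0, b n = 0) (m : ℕ) :
    conv a b m = ∑ k ∈ range (m + 1), a k * b ↑(m - k) := by
  have hsupp : ∀ k ∉ (range (m + 1)).map Nat.castEmbedding, a k * b (m - k) = 0 := by
    intro k hk
    rcases lt_or_ge k 0 with hk0 | hk0
    · simp [ha k hk0]
    · lift k to ℕ using hk0
      have hmk : (m : ℤ) - k < 0 := by simp_all
      simp [hb _ hmk]
  rw [conv, tsum_eq_sum hsupp, sum_map]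
  refine sum_congr rfl fun k hk => ?_
  rw [Nat.cast_sub (Nat.lt_succ_iff.mp (mem_range.mp hk))]
  rfl

theorem conv_eq_zero_of_neg (ha : ∀ n < 0, a n = 0) (hb : ∀ n < 0, b n = 0) {n : ℤ}
    (hn : n < 0) : conv a b n = 0 := by
  have hzero : ∀ k, a k * b (n - k) = 0 := fun k => by
    rcases lt_or_ge k 0 with hk | hk
    · simp [ha k hk]
    · simp [hb (n - k) (by omega)]
  simp [conv, hzero]

end SupportedOnNat

theorem poisson_natCast (c : ℝ) (k : ℕ) :
    poisson c k = Real.exp (-c) * c ^ k / k.factorial := by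
  simp [poisson]

theorem poisson_of_neg (c : ℝ) {n : ℤ} (hn : n < 0) : poisson c n = 0 := by
  simp [poisson, not_le.mpr hn]

theorem conv_poisson (a b : ℝ) (n : ℤ) :
    conv (poisson a) (poisson b) n = poisson (a + b) n := by
  rcases lt_or_ge n 0 with hn | hn
  · rw [conv_eq_zero_of_neg (fun _ => poisson_of_neg a) (fun _ => poisson_of_neg b) hn,
      poisson_of_neg _ hn]
  lift n to ℕ using hn
  rw [conv_natCast_eq_sum_range (fun _ => poisson_of_neg a) (fun _ => poisson_of_neg b),
    poisson_natCast, mul_div_assoc, add_pow_div_factorial, mul_sum, neg_add, Real.exp_add]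
  refine sum_congr rfl fun k _ => ?_
  rw [poisson_natCast, poisson_natCast]
  ring

theorem poisson_nonneg_iff {c : ℝ} : (∀ n, 0 ≤ poisson c n) ↔ 0 ≤ c := by
  refine ⟨fun h => ?_, fun hc n => ?_⟩
  · have h1 := h 1
    rw [show (1 : ℤ) = (1 : ℕ) from rfl, poisson_natCast] at h1
    simpa [Real.exp_pos] using h1
  · unfold poisson
    split <;> positivity

theorem conv_poisson_nonneg_iff {a b : ℝ} :
    (∀ n, 0 ≤ conv (poisson a) (poisson b) n) ↔ 0 ≤ a + b := by
  simp only [conv_poisson, poisson_nonneg_iff]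

theorem setOf_poisson_majorizes_eq_Ici {lam : ℝ} (hlam : 0 ≤ lam) :
    {mu : ℝ | 0 ≤ mu ∧ ∀ n, 0 ≤ conv (poisson mu) (poisson (-lam)) n} = Set.Ici lam := by
  ext mu
  simp only [Set.mem_ofPred_eq, Set.mem_Ici, conv_poisson_nonneg_iff]
  exact ⟨fun h => by linarith [h.2], fun h => ⟨hlam.trans h, by linarith⟩⟩

theorem setOf_poisson_majorized_eq_Icc (lam : ℝ) :
    {mu : ℝ | 0 ≤ mu ∧ ∀ n, 0 ≤ conv (poisson lam) (poisson (-mu)) n} = Set.Icc 0 lam := by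
  ext mu
  simp only [Set.mem_ofPred_eq, Set.mem_Icc, conv_poisson_nonneg_iff]
  exact ⟨fun h => ⟨h.1, by linarith [h.2]⟩, fun h => ⟨h.1, by linarith [h.2]⟩⟩

theorem Fmax_poisson {lam : ℝ} (hlam : 0 ≤ lam) :
    Fmax (poisson (-lam)) = ENNReal.ofReal (4 * lam) := by
  refine IsLeast.csInf_eq ⟨⟨lam, hlam, conv_poisson_nonneg_iff.2 (by simp), rfl⟩, ?_⟩
  rintro _ ⟨mu, -, hmu, rfl⟩
  exact ENNReal.ofReal_le_ofReal (by linarith [conv_poisson_nonneg_iff.1 hmu])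

theorem Fmin_poisson {lam : ℝ} (hlam : 0 ≤ lam) :
    Fmin (poisson lam) = ENNReal.ofReal (4 * lam) := by
  refine IsGreatest.csSup_eq ⟨⟨lam, hlam, conv_poisson_nonneg_iff.2 (by simp), rfl⟩, ?_⟩
  rintro _ ⟨mu, -, hmu, rfl⟩
  exact ENNReal.ofReal_le_ofReal (by linarith [conv_poisson_nonneg_iff.1 hmu])

/-- for every `λ ≥ 0`, `F_max(P_λ) = 4λ = F_min(P_λ)` (recall
`P̃_λ = P_{−λ}`, so `F_max(P_λ) = Fmax (poisson (-λ))`); equivalently,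
`{μ ≥ 0 | P_μ ≻_a P_λ} = [λ,∞)` and `{μ ≥ 0 | P_λ ≻_a P_μ} = [0,λ]`. -/
theorem qfi_poisson (lam : ℝ) (hlam : 0 ≤ lam) :
    Fmax (poisson (-lam)) = ENNReal.ofReal (4 * lam) ∧
    Fmin (poisson lam) = ENNReal.ofReal (4 * lam) ∧
    {mu : ℝ | 0 ≤ mu ∧ ∀ n : ℤ, 0 ≤ conv (poisson mu) (poisson (-lam)) n}
      = Set.Ici lam ∧
    {mu : ℝ | 0 ≤ mu ∧ ∀ n : ℤ, 0 ≤ conv (poisson lam) (poisson (-mu)) n}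
      = Set.Icc 0 lam :=
  ⟨Fmax_poisson hlam, Fmin_poisson hlam, setOf_poisson_majorizes_eq_Ici hlam,
    setOf_poisson_majorized_eq_Icc lam⟩
end
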